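/- arXiv:1102.4132 — 5 statements merged into one kernel-verified Lean document; each statement's English description precedes it below -/
import Mathlib

section
/- Let u̅ and u̲ be nonnegative functions on [−p/α,∞) that are, respectively, a viscosity super-solution and a viscosity sub-solution of the HJB equation on (−p/α,∞). Assume each of u̅, u̲ is continuous on [−p/α,∞), locally Lipschitz on (−p/α,∞), satisfies u̅(−p/α) = u̲(−p/α) = 0, and satisfies a linear growth bound (there exist constants c₁, c₂ with u(x) ≤ c₁·x + c₂ for all x ≥ −p/α). Then u̲(x) ≤ u̅(x) for all x ≥ −p/α. -/
open MeasureTheory Set Filter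

noncomputable section

/-- Drift coefficient: c(x) = p + r x for x ≥ 0, c(x) = p + α x for x < 0. -/
def drift (p r a x : ℝ) : ℝ := if 0 ≤ x then p + r * x else p + a * x

/-- I_v(x) = ∫_{(0, x+p/α]} v(x−u) dμ(u). -/
def Iop (p a : ℝ) (mu : Measure ℝ) (v : ℝ → ℝ) (x : ℝ) : ℝ :=
  ∫ u in Set.Ioc (0 : ℝ) (x + p / a), v (x - u) ∂mu

/-- L_{v,φ}(x) = c(x)·φ′(x) − (λ+δ)·v(x) + λ·I_v(x). -/
def Lphi (p lam d r a : ℝ) (mu : Measure ℝ) (v phi : ℝ → ℝ) (x : ℝ) : ℝ :=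
  drift p r a x * deriv phi x - (lam + d) * v x + lam * Iop p a mu v x

/-- G_v(x) = c(x) − (λ+δ)·v(x) + λ·I_v(x). -/
def Gop (p lam d r a : ℝ) (mu : Measure ℝ) (v : ℝ → ℝ) (x : ℝ) : ℝ :=
  drift p r a x - (lam + d) * v x + lam * Iop p a mu v x

/-- Viscosity sub-solution of the HJB equation on J ⊆ (−p/α,∞). -/
def IsViscSubsol (p lam d r a : ℝ) (mu : Measure ℝ) (u : ℝ → ℝ) (J : Set ℝ) : Prop :=
  ∀ x ∈ J, ∀ phi : ℝ → ℝ, ContDiff ℝ 1 phi → phi x = u x →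
    (∀ y ∈ Set.Ici (-(p / a)), u y - phi y ≤ u x - phi x) →
    0 ≤ max (1 - deriv phi x) (Lphi p lam d r a mu u phi x)

/-- Viscosity super-solution of the HJB equation on J ⊆ (−p/α,∞). -/
def IsViscSupersol (p lam d r a : ℝ) (mu : Measure ℝ) (u : ℝ → ℝ) (J : Set ℝ) : Prop :=
  ∀ x ∈ J, ∀ phi : ℝ → ℝ, ContDiff ℝ 1 phi → phi x = u x →
    (∀ y ∈ Set.Ici (-(p / a)), u x - phi x ≤ u y - phi y) →
    max (1 - deriv phi x) (Lphi p lam d r a mu u phi x) ≤ 0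

/-- Viscosity solution: both sub- and super-solution. -/
def IsViscSol (p lam d r a : ℝ) (mu : Measure ℝ) (u : ℝ → ℝ) (J : Set ℝ) : Prop :=
  IsViscSubsol p lam d r a mu u J ∧ IsViscSupersol p lam d r a mu u J

/-- Locally Lipschitz on a set. -/
def LocLipOn (s : Set ℝ) (u : ℝ → ℝ) : Prop :=
  ∀ x ∈ s, ∃ K : NNReal, ∃ eps : ℝ, 0 < eps ∧ LipschitzOnWith K u (s ∩ Metric.ball x eps)

/-- Linear growth bound on [−p/α,∞). -/
def LinGrowth (p a : ℝ) (u : ℝ → ℝ) : Prop :=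
  ∃ c₁ c₂ : ℝ, ∀ x : ℝ, -(p / a) ≤ x → u x ≤ c₁ * x + c₂

/-- Standard value-function candidate. -/
structure IsCandidate (p lam d r a : ℝ) (mu : Measure ℝ) (V : ℝ → ℝ) : Prop where
  cont : ContinuousOn V (Set.Ici (-(p / a)))
  nonneg : ∀ x ∈ Set.Ici (-(p / a)), 0 ≤ V x
  mono : MonotoneOn V (Set.Ici (-(p / a)))
  boundary : V (-(p / a)) = 0
  slope : ∀ x y : ℝ, -(p / a) ≤ x → x ≤ y → y - x ≤ V y - V x
  growth : ∀ x : ℝ, 0 ≤ x → V x ≤ (d * x + p) / (d - r) + p / a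
  locLip : LocLipOn (Set.Ioi (-(p / a))) V
  visc : IsViscSol p lam d r a mu V (Set.Ioi (-(p / a)))
  derivLim : ∀ x ∈ Set.Ioi (-(p / a)), ∀ (h : ℕ → ℝ) (dd : ℝ),
      ((∀ n, 0 < h n) ∨ (∀ n, h n < 0)) →
      Filter.Tendsto h Filter.atTop (nhds 0) →
      Filter.Tendsto (fun n => (V (x + h n) - V x) / h n) Filter.atTop (nhds dd) →
      1 ≤ dd ∧ dd * drift p r a x - (lam + d) * V x + lam * Iop p a mu V x ≤ 0

/-- The set A = {x ∈ [−p/α,∞) : G_V(x) = 0}. -/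
def setA (p lam d r a : ℝ) (mu : Measure ℝ) (V : ℝ → ℝ) : Set ℝ :=
  {x | x ∈ Set.Ici (-(p / a)) ∧ Gop p lam d r a mu V x = 0}

/-- The set B = {x ∈ [−p/α,∞) : V′(x) exists, V′(x) = 1 and G_V(x) < 0}. -/
def setB (p lam d r a : ℝ) (mu : Measure ℝ) (V : ℝ → ℝ) : Set ℝ :=
  {x | x ∈ Set.Ici (-(p / a)) ∧ DifferentiableAt ℝ V x ∧ deriv V x = 1 ∧
      Gop p lam d r a mu V x < 0}

/-- The set C = [−p/α,∞) \ (A ∪ B). -/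
def setC (p lam d r a : ℝ) (mu : Measure ℝ) (V : ℝ → ℝ) : Set ℝ :=
  Set.Ici (-(p / a)) \ (setA p lam d r a mu V ∪ setB p lam d r a mu V)


/-!
Doubling of variables. The weight `w x = (1 + (p + r x)²) ^ (d / (2 r))` grows superlinearly and
satisfies `c(x) w'(x) ≤ d w(x)` on `[-p/α, ∞)`, so it suffices to show `usub ≤ ubar + η w` for
each `η > 0`. If this fails at `x₀`, then `Ψₜ(x, y) = usub x - η w x - ubar y - t (x - y)²` has a
positive maximum on `[-p/α, ∞)²` for every `t > 0`. The maximal values decrease in `t` and are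
bounded below, which forces `t (x - y)² → 0` at the maximisers along suitable `t`; the boundary
values `usub = ubar = 0` at `-p/α` then keep the maximiser in the interior. Testing the
sub-solution at `x` and the super-solution at `y` with the quadratic penalty and subtracting, the
drift difference costs `2α t (x - y)²`, the weight is absorbed by `c w' ≤ d w`, and the nonlocal
terms are controlled by maximality of `Ψₜ` at the shifted points `(x - u, y - u)`, up to a small
piece near `-p/α`. This leaves `d Ψₜ(x, y) ≤ o(1)`, contradicting `Ψₜ(x, y) ≥ Ψₜ(x₀, x₀) > 0`.
-/

lemma drift_le {p r a : ℝ} (hra : r ≤ a) (x : ℝ) : drift p r a x ≤ p + r * x := by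
  unfold drift
  split_ifs with hx
  · rfl
  · nlinarith

lemma drift_nonneg {p r a x : ℝ} (hp : 0 ≤ p) (hr : 0 ≤ r) (ha : 0 < a) (hx : -(p / a) ≤ x) :
    0 ≤ drift p r a x := by
  have hpa : a * (p / a) = p := mul_div_cancel₀ p ha.ne'
  unfold drift
  split_ifs <;> nlinarith

lemma drift_sub_drift_le {p r a x y : ℝ} (hra : r ≤ a) (hyx : y ≤ x) :
    drift p r a x - drift p r a y ≤ a * (x - y) := by
  unfold drift
  split_ifs <;> nlinarith

def bracketRpow (e t : ℝ) : ℝ := (1 + t ^ 2) ^ (e / 2)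

lemma bracketRpow_pos (e t : ℝ) : 0 < bracketRpow e t := by
  unfold bracketRpow; positivity

lemma hasDerivAt_bracketRpow (e t : ℝ) :
    HasDerivAt (bracketRpow e) (e * t * (1 + t ^ 2) ^ (e / 2 - 1)) t := by
  have h := ((hasDerivAt_pow 2 t).const_add 1).rpow_const (p := e / 2) (Or.inl (by positivity))
  exact h.congr_deriv (by push_cast; ring)

lemma contDiff_bracketRpow (e : ℝ) : ContDiff ℝ 1 (bracketRpow e) :=
  contDiff_iff_contDiffAt.2 fun t =>
    (contDiffAt_const.add (contDiffAt_id.pow 2)).rpow_const_of_ne (by positivity)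

lemma rpow_le_bracketRpow {e t : ℝ} (he : 0 ≤ e) (ht : 0 ≤ t) : t ^ e ≤ bracketRpow e t := by
  calc t ^ e = (t ^ 2) ^ (e / 2) := by
        rw [← Real.rpow_natCast, ← Real.rpow_mul ht]; congr 1; push_cast; ring
    _ ≤ bracketRpow e t := Real.rpow_le_rpow (by positivity) (by linarith) (by positivity)

lemma monotoneOn_bracketRpow {e : ℝ} (he : 0 ≤ e) : MonotoneOn (bracketRpow e) (Ici 0) :=
  fun s hs t _ hst => Real.rpow_le_rpow (by positivity)
    (by have := pow_le_pow_left₀ (mem_Ici.1 hs) hst 2; linarith) (by positivity)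

lemma mul_deriv_bracketRpow_le {e : ℝ} (he : 0 ≤ e) (t : ℝ) :
    t * (e * t * (1 + t ^ 2) ^ (e / 2 - 1)) ≤ e * bracketRpow e t := by
  have hpos : 0 < 1 + t ^ 2 := by positivity
  have hsplit : bracketRpow e t = (1 + t ^ 2) ^ (e / 2 - 1) * (1 + t ^ 2) := by
    rw [bracketRpow, ← Real.rpow_add_one hpos.ne']; ring_nf
  rw [hsplit]
  have := Real.rpow_pos_of_pos hpos (e / 2 - 1)
  nlinarith

lemma tendsto_linear_sub_bracketRpow {p r e η : ℝ} (hr : 0 < r) (he : 1 < e) (hη : 0 < η)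
    (c₁ c₂ : ℝ) :
    Tendsto (fun x => c₁ * x + c₂ - η * bracketRpow e (p + r * x)) atTop atBot := by
  have hlin : Tendsto (fun x => p + r * x) atTop atTop :=
    tendsto_atTop_add_const_left _ _ (tendsto_id.const_mul_atTop hr)
  have hpow : Tendsto (fun t : ℝ => c₁ / r - η * t ^ (e - 1)) atTop atBot := by
    have := tendsto_neg_atTop_atBot.comp ((tendsto_rpow_atTop (sub_pos.2 he)).const_mul_atTop hη)
    simpa [sub_eq_add_neg] using tendsto_atBot_add_const_left _ (c₁ / r) this
  have hmain : Tendsto (fun t : ℝ => t * (c₁ / r - η * t ^ (e - 1)) + (c₂ - c₁ * p / r))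
      atTop atBot :=
    tendsto_atBot_add_const_right _ _ (tendsto_id.atTop_mul_atBot₀ hpow)
  refine tendsto_atBot_mono' atTop ?_ (hmain.comp hlin)
  filter_upwards [hlin.eventually_gt_atTop 0] with x hx
  have hsplit : (p + r * x) ^ e = (p + r * x) * (p + r * x) ^ (e - 1) := by
    conv_lhs => rw [show e = 1 + (e - 1) by ring, Real.rpow_add hx, Real.rpow_one]
  have hbr := rpow_le_bracketRpow (by linarith) hx.le (e := e)
  have hc : c₁ * x = c₁ / r * (p + r * x) - c₁ * p / r := by field_simp; ring
  simp only [Function.comp]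
  nlinarith

lemma setIntegral_le_of_forall_le {mu : Measure ℝ} [IsProbabilityMeasure mu] {f : ℝ → ℝ}
    {s : Set ℝ} {C : ℝ} (hs : MeasurableSet s) (hf : IntegrableOn f s mu) (hC : 0 ≤ C)
    (h : ∀ u ∈ s, f u ≤ C) : ∫ u in s, f u ∂mu ≤ C :=
  calc ∫ u in s, f u ∂mu ≤ ∫ _ in s, C ∂mu :=
        setIntegral_mono_on hf (integrableOn_const (measure_ne_top mu s)) hs h
    _ = mu.real s * C := setIntegral_const C
    _ ≤ C := mul_le_of_le_one_left hC measureReal_le_one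

lemma ContinuousOn.integrableOn_Ioc_comp_sub {v : ℝ → ℝ} {c x b₁ b₂ : ℝ}
    (hv : ContinuousOn v (Ici c)) (hb : b₂ ≤ x - c) (mu : Measure ℝ) [IsFiniteMeasure mu] :
    IntegrableOn (fun u => v (x - u)) (Ioc b₁ b₂) mu :=
  ((hv.comp (continuous_sub_left x).continuousOn fun u hu => by
      simp only [mem_Ici]; linarith [hu.2]).integrableOn_compact isCompact_Icc).mono_set
    Ioc_subset_Icc_self

lemma Iop_sub_Iop_le {p a : ℝ} {mu : Measure ℝ} [IsProbabilityMeasure mu] {v₁ v₂ : ℝ → ℝ}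
    (h₁ : ContinuousOn v₁ (Ici (-(p / a)))) (h₂ : ContinuousOn v₂ (Ici (-(p / a))))
    {x y W ε : ℝ} (hy : -(p / a) ≤ y) (hyx : y ≤ x) (hW : 0 ≤ W) (hε : 0 ≤ ε)
    (hshift : ∀ u ∈ Ioc 0 (y + p / a), v₁ (x - u) - v₂ (y - u) ≤ W)
    (hsmall : ∀ z ∈ Icc (-(p / a)) (-(p / a) + (x - y)), v₁ z ≤ ε) :
    Iop p a mu v₁ x - Iop p a mu v₂ y ≤ W + ε := by
  have i₁ := h₁.integrableOn_Ioc_comp_sub (x := x) (b₁ := 0) (b₂ := y + p / a) (by linarith) mu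
  have i₁' := h₁.integrableOn_Ioc_comp_sub (x := x) (b₁ := y + p / a) (b₂ := x + p / a)
    (by linarith) mu
  have i₂ := h₂.integrableOn_Ioc_comp_sub (x := y) (b₁ := 0) (b₂ := y + p / a) (by linarith) mu
  have hsplit : Iop p a mu v₁ x = (∫ u in Ioc 0 (y + p / a), v₁ (x - u) ∂mu)
      + ∫ u in Ioc (y + p / a) (x + p / a), v₁ (x - u) ∂mu := by
    rw [Iop, ← Ioc_union_Ioc_eq_Ioc (show 0 ≤ y + p / a by linarith)
      (show y + p / a ≤ x + p / a by linarith)]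
    exact setIntegral_union (Ioc_disjoint_Ioc_of_le le_rfl) measurableSet_Ioc i₁ i₁'
  have hnear : (∫ u in Ioc 0 (y + p / a), v₁ (x - u) ∂mu)
      - ∫ u in Ioc 0 (y + p / a), v₂ (y - u) ∂mu ≤ W := by
    rw [← integral_sub i₁ i₂]
    exact setIntegral_le_of_forall_le measurableSet_Ioc (i₁.sub i₂) hW hshift
  have hfar : ∫ u in Ioc (y + p / a) (x + p / a), v₁ (x - u) ∂mu ≤ ε :=
    setIntegral_le_of_forall_le measurableSet_Ioc i₁' hε fun u hu =>
      hsmall _ ⟨by linarith [hu.2], by linarith [hu.1]⟩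
  rw [hsplit, Iop]
  linarith

lemma ContinuousOn.exists_isMaxOn_of_le_off_compact {X : Type*} [TopologicalSpace X]
    {f : X → ℝ} {s K : Set X} (hf : ContinuousOn f s) (hs : IsClosed s) (hK : IsCompact K)
    {x₀ : X} (hx₀ : x₀ ∈ s) (hout : ∀ x ∈ s, x ∉ K → f x ≤ f x₀) :
    ∃ x ∈ s, IsMaxOn f s x :=
  hf.exists_isMaxOn' hs hx₀ (eventually_inf_principal.2
    (mem_of_superset hK.compl_mem_cocompact fun x hxK hxs => hout x hxs hxK))

lemma exists_isMaxOn_sub_sub_mul_sq {f h : ℝ → ℝ} {c t R x₀ : ℝ}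
    (hf : ContinuousOn f (Ici c)) (hh : ContinuousOn h (Ici c)) (hh0 : ∀ y ∈ Ici c, 0 ≤ h y)
    (ht : 0 < t) (hx₀ : c ≤ x₀) (hR : ∀ x, R ≤ x → f x ≤ f x₀ - h x₀) :
    ∃ z ∈ Ici c ×ˢ Ici c,
      IsMaxOn (fun z : ℝ × ℝ => f z.1 - h z.2 - t * (z.1 - z.2) ^ 2) (Ici c ×ˢ Ici c) z := by
  set R₁ := max R x₀
  obtain ⟨M, hM⟩ := isCompact_Icc.bddAbove_image (hf.mono (Icc_subset_Ici_self : Icc c R₁ ⊆ Ici c))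
  set R₂ := R₁ + 1 + |M - (f x₀ - h x₀)| / t
  have hcont : ContinuousOn (fun z : ℝ × ℝ => f z.1 - h z.2 - t * (z.1 - z.2) ^ 2)
      (Ici c ×ˢ Ici c) :=
    ((hf.comp continuousOn_fst fun z hz => hz.1).sub
      (hh.comp continuousOn_snd fun z hz => hz.2)).sub (by fun_prop)
  refine hcont.exists_isMaxOn_of_le_off_compact (isClosed_Ici.prod isClosed_Ici)
    ((isCompact_Icc : IsCompact (Icc c R₁)).prod (isCompact_Icc : IsCompact (Icc c R₂)))
    (mk_mem_prod hx₀ hx₀) ?_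
  rintro ⟨x, y⟩ ⟨hx, hy⟩ hK
  simp only [mem_Ici] at hx hy
  suffices f x - h y - t * (x - y) ^ 2 ≤ f x₀ - h x₀ by simpa using this
  have hhy := hh0 y hy
  by_cases hxR : x ≤ R₁
  · have hyR : R₂ < y := by
      by_contra! hyR
      exact hK ⟨⟨hx, hxR⟩, ⟨hy, hyR⟩⟩
    have hfx : f x ≤ M := hM (mem_image_of_mem f ⟨hx, hxR⟩)
    have hgap : 1 + |M - (f x₀ - h x₀)| / t ≤ y - x := by linarith
    have hsq : y - x ≤ (x - y) ^ 2 := by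
      have h1 : 1 ≤ y - x := by linarith [div_nonneg (abs_nonneg (M - (f x₀ - h x₀))) ht.le]
      nlinarith
    have hpen : |M - (f x₀ - h x₀)| ≤ t * (x - y) ^ 2 := by
      have := mul_le_mul_of_nonneg_left (hgap.trans hsq) ht.le
      rw [mul_add, mul_div_cancel₀ _ ht.ne'] at this
      linarith
    linarith [le_abs_self (M - (f x₀ - h x₀))]
  · have := hR x (by linarith [le_max_left R x₀])
    nlinarith

lemma exists_isMaxOn_penalized_le {α : Type*} {s : Set α} {Φ δ : α → ℝ} {z₀ : α}
    (hz₀ : z₀ ∈ s) (hδz₀ : δ z₀ = 0)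
    (hmax : ∀ t : ℝ, 0 < t → ∃ z ∈ s, IsMaxOn (fun z => Φ z - t * δ z) s z)
    {ε : ℝ} (hε : 0 < ε) :
    ∃ t : ℝ, 1 ≤ t ∧ ∃ z ∈ s, IsMaxOn (fun z => Φ z - t * δ z) s z ∧ t * δ z ≤ ε := by
  have : Nonempty α := ⟨z₀⟩
  choose! z hzs hzmax using hmax
  set S : ℕ → ℝ := fun k => Φ (z (k + 1)) - (k + 1) * δ (z (k + 1))
  have hS : BddBelow (Set.range S) := ⟨Φ z₀, by
    rintro _ ⟨k, rfl⟩
    simpa [hδz₀] using hzmax (k + 1) (by positivity) hz₀⟩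
  -- with `S N` within `ε / 2` of `inf S`, the penalty `t = 2 (N + 1)` works, since
  -- `S N ≥ S (2 N + 1) + (N + 1) * δ (z t)`
  obtain ⟨N, hN⟩ : ∃ N, S N < (⨅ k, S k) + ε / 2 :=
    exists_lt_of_ciInf_lt (by linarith)
  set t : ℝ := ((2 * N + 1 : ℕ) : ℝ) + 1
  have ht : t = 2 * ((N : ℝ) + 1) := by simp only [t]; push_cast; ring
  have hpos : 0 < t := by positivity
  refine ⟨t, by rw [ht]; linarith [(N.cast_nonneg : (0 : ℝ) ≤ N)], z t, hzs t hpos,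
    hzmax t hpos, ?_⟩
  have hinf : (⨅ k, S k) ≤ Φ (z t) - t * δ (z t) := ciInf_le hS (2 * N + 1)
  have hNt : Φ (z t) - (N + 1) * δ (z t) ≤ S N := hzmax _ (by positivity) (hzs t hpos)
  rw [ht] at hinf hNt ⊢
  linarith

section Viscosity

variable {p lam d r a : ℝ} {mu : Measure ℝ} {u ψ : ℝ → ℝ} {J : Set ℝ} {x q : ℝ}

lemma IsViscSupersol.test_of_isMinOn (hu : IsViscSupersol p lam d r a mu u J) (hx : x ∈ J)
    (hψ : ContDiff ℝ 1 ψ) (hψx : HasDerivAt ψ q x)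
    (hmin : IsMinOn (fun y => u y - ψ y) (Ici (-(p / a))) x) :
    1 ≤ q ∧ drift p r a x * q - (lam + d) * u x + lam * Iop p a mu u x ≤ 0 := by
  have h := hu x hx (fun y => ψ y + (u x - ψ x)) (hψ.add contDiff_const) (by ring)
    fun y hy => by linarith [isMinOn_iff.1 hmin y hy]
  rw [Lphi, (hψx.add_const _).deriv] at h
  obtain ⟨h₁, h₂⟩ := max_le_iff.1 h
  exact ⟨by linarith, h₂⟩

lemma IsViscSubsol.test_of_isMaxOn (hu : IsViscSubsol p lam d r a mu u J) (hx : x ∈ J)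
    (hψ : ContDiff ℝ 1 ψ) (hψx : HasDerivAt ψ q x)
    (hmax : IsMaxOn (fun y => u y - ψ y) (Ici (-(p / a))) x) (hq : 1 < q) :
    0 ≤ drift p r a x * q - (lam + d) * u x + lam * Iop p a mu u x := by
  have h := hu x hx (fun y => ψ y + (u x - ψ x)) (hψ.add contDiff_const) (by ring)
    fun y hy => by linarith [isMaxOn_iff.1 hmax y hy]
  rw [Lphi, (hψx.add_const _).deriv] at h
  exact (le_max_iff.1 h).resolve_left (by linarith)

end Viscosity

section Comparison

variable {p lam d r a : ℝ} {mu : Measure ℝ} {usub ubar : ℝ → ℝ}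

lemma add_mul_nonneg_of_le (hp : 0 ≤ p) (hr : 0 < r) (hra : r ≤ a) {x : ℝ}
    (hx : -(p / a) ≤ x) : 0 ≤ p + r * x :=
  (drift_nonneg hp hr.le (hr.trans_le hra) hx).trans (drift_le hra x)

lemma hasDerivAt_bracketRpow_affine (e p r x : ℝ) :
    HasDerivAt (fun x => bracketRpow e (p + r * x))
      (r * (e * (p + r * x) * (1 + (p + r * x) ^ 2) ^ (e / 2 - 1))) x := by
  have h := (hasDerivAt_bracketRpow e (p + r * x)).comp x
    (((hasDerivAt_id x).const_mul r).const_add p)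
  exact h.congr_deriv (by simp only [mul_one]; ring)

lemma drift_mul_deriv_bracketRpow_le (hp : 0 ≤ p) (hr : 0 < r) (hra : r ≤ a) (hd : 0 ≤ d)
    {x : ℝ} (hx : -(p / a) ≤ x) :
    drift p r a x * (r * (d / r * (p + r * x) * (1 + (p + r * x) ^ 2) ^ (d / r / 2 - 1)))
      ≤ d * bracketRpow (d / r) (p + r * x) := by
  set t := p + r * x
  set D := d / r * t * (1 + t ^ 2) ^ (d / r / 2 - 1)
  have ht : 0 ≤ t := add_mul_nonneg_of_le hp hr hra hx
  have hD : 0 ≤ D := by positivity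
  calc drift p r a x * (r * D) ≤ t * (r * D) :=
        mul_le_mul_of_nonneg_right (drift_le hra x) (by positivity)
    _ = r * (t * D) := by ring
    _ ≤ r * (d / r * bracketRpow (d / r) t) :=
        mul_le_mul_of_nonneg_left (mul_deriv_bracketRpow_le (by positivity) t) hr.le
    _ = d * bracketRpow (d / r) t := by field_simp

theorem doubling_max_estimate [IsProbabilityMeasure mu] (hp : 0 ≤ p) (hlam : 0 ≤ lam)
    (hd : 0 < d) (hr : 0 < r) (hra : r ≤ a)
    (hsub : IsViscSubsol p lam d r a mu usub (Ioi (-(p / a))))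
    (hsuper : IsViscSupersol p lam d r a mu ubar (Ioi (-(p / a))))
    (hus : ContinuousOn usub (Ici (-(p / a)))) (hub : ContinuousOn ubar (Ici (-(p / a))))
    {t η ε x y : ℝ} (ht : 0 < t) (hη : 0 < η) (hε : 0 ≤ ε)
    (hx : -(p / a) < x) (hy : -(p / a) < y) (hW : ubar y ≤ usub x)
    (hsmall : ∀ z ∈ Icc (-(p / a)) (-(p / a) + (x - y)), usub z ≤ ε)
    (hmax : IsMaxOn (fun z : ℝ × ℝ => usub z.1 - η * bracketRpow (d / r) (p + r * z.1)
      - ubar z.2 - t * (z.1 - z.2) ^ 2) (Ici (-(p / a)) ×ˢ Ici (-(p / a))) (x, y)) :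
    d * (usub x - η * bracketRpow (d / r) (p + r * x) - ubar y)
      ≤ 2 * a * (t * (x - y) ^ 2) + lam * ε := by
  set c := -(p / a)
  set w := fun x => bracketRpow (d / r) (p + r * x)
  set w' := r * (d / r * (p + r * x) * (1 + (p + r * x) ^ 2) ^ (d / r / 2 - 1))
  have hΨ : ∀ x' ∈ Ici c, ∀ y' ∈ Ici c, usub x' - η * w x' - ubar y' - t * (x' - y') ^ 2
      ≤ usub x - η * w x - ubar y - t * (x - y) ^ 2 :=
    fun x' hx' y' hy' => isMaxOn_iff.1 hmax (x', y') ⟨hx', hy'⟩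
  obtain ⟨hq, hsup⟩ := hsuper.test_of_isMinOn (ψ := fun y' => -(t * (x - y') ^ 2))
    (q := 2 * t * (x - y)) hy (by fun_prop)
    ((((hasDerivAt_id y).const_sub x).pow 2).const_mul t |>.neg |>.congr_deriv (by
      simp only [Nat.cast_ofNat, id_eq, Nat.add_one_sub_one, pow_one, mul_neg, mul_one, neg_neg]
      ring))
    (isMinOn_iff.2 fun y' hy' => by linarith [hΨ x hx.le y' hy'])
  have hyx : y < x := by nlinarith
  have hpx : 0 < p + r * x := by
    linarith [add_mul_nonneg_of_le hp hr hra (le_refl c), mul_lt_mul_of_pos_left hx hr]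
  have hw' : 0 < w' := by positivity
  have hsb := hsub.test_of_isMaxOn (ψ := fun x' => t * (x' - y) ^ 2 + η * w x')
    (q := 2 * t * (x - y) + η * w') hx
    ((contDiff_const.mul ((contDiff_id.sub contDiff_const).pow 2)).add (contDiff_const.mul
      ((contDiff_bracketRpow _).comp (contDiff_const.add (contDiff_const.mul contDiff_id)))))
    (((((hasDerivAt_id x).sub_const y).pow 2).const_mul t).add
      ((hasDerivAt_bracketRpow_affine _ p r x).const_mul η) |>.congr_deriv (by
        simp only [Nat.cast_ofNat, id_eq, Nat.add_one_sub_one, pow_one, mul_one]; ring))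
    (isMaxOn_iff.2 fun x' hx' => by linarith [hΨ x' hx' y hy.le]) (by nlinarith)
  have hI := Iop_sub_Iop_le (mu := mu) hus hub hy.le hyx.le (sub_nonneg.2 hW) hε
    (fun u hu => by
      have hxu : c ≤ x - u := by simp only [c]; linarith [hu.2]
      have hw : w (x - u) ≤ w x := monotoneOn_bracketRpow (by positivity)
        (add_mul_nonneg_of_le hp hr hra hxu) hpx.le (by nlinarith [hu.1])
      have := hΨ (x - u) hxu (y - u) (by simp only [c, mem_Ici]; linarith [hu.2])
      nlinarith) hsmall
  have hdrift := mul_le_mul_of_nonneg_right (drift_sub_drift_le hra hyx.le (p := p))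
    (by linarith : 0 ≤ 2 * t * (x - y))
  have hweight := mul_le_mul_of_nonneg_left
    (drift_mul_deriv_bracketRpow_le hp hr hra hd.le hx.le) hη.le
  have hIlam := mul_le_mul_of_nonneg_left hI hlam
  linarith

end Comparison

theorem IsViscSubsol.le_add_mul_bracketRpow {p lam d r a : ℝ} {mu : Measure ℝ}
    [IsProbabilityMeasure mu] {usub ubar : ℝ → ℝ}
    (hsub : IsViscSubsol p lam d r a mu usub (Ioi (-(p / a))))
    (hsuper : IsViscSupersol p lam d r a mu ubar (Ioi (-(p / a))))
    (hp : 0 ≤ p) (hlam : 0 ≤ lam) (hd : 0 < d) (hr : 0 < r) (hra : r ≤ a) (hrd : r < d)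
    (hus : ContinuousOn usub (Ici (-(p / a)))) (hub : ContinuousOn ubar (Ici (-(p / a))))
    (hub0 : ∀ y ∈ Ici (-(p / a)), 0 ≤ ubar y)
    (hus_bdry : usub (-(p / a)) = 0) (hub_bdry : ubar (-(p / a)) = 0)
    (hgrowth : LinGrowth p a usub) {η x₀ : ℝ} (hη : 0 < η) (hx₀ : -(p / a) ≤ x₀) :
    usub x₀ ≤ ubar x₀ + η * bracketRpow (d / r) (p + r * x₀) := by
  by_contra! hV
  set c := -(p / a)
  set f := fun x => usub x - η * bracketRpow (d / r) (p + r * x)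
  set V := f x₀ - ubar x₀
  replace hV : 0 < V := by simp only [V, f]; linarith
  have ha : 0 < a := hr.trans_le hra
  have hf : ContinuousOn f (Ici c) := hus.sub (continuous_const.mul
    ((contDiff_bracketRpow _).continuous.comp (by fun_prop))).continuousOn
  obtain ⟨R, hR⟩ : ∃ R, ∀ x, R ≤ x → f x ≤ V := by
    obtain ⟨c₁, c₂, hc⟩ := hgrowth
    have hf_lim : Tendsto f atTop atBot := tendsto_atBot_mono' atTop
      (by filter_upwards [eventually_ge_atTop c] with x hx using sub_le_sub_right (hc x hx) _)
      (tendsto_linear_sub_bracketRpow hr ((one_lt_div hr).2 hrd) hη c₁ c₂)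
    exact eventually_atTop.1 (hf_lim.eventually_le_atBot V)
  -- `ε` and the bound `d V / (8 a)` on the penalty make the final estimate read `d V ≤ d V / 2`
  set ε := d * V / (4 * (lam + 1))
  obtain ⟨b, hb, hsmall⟩ : ∃ b ∈ Ioi c, Icc c b ⊆ {z | usub z < min ε V} :=
    mem_nhdsGE_iff_exists_Icc_subset.1
      ((hus c self_mem_Ici).eventually (gt_mem_nhds (by rw [hus_bdry]; positivity)))
  obtain ⟨t, ht, ⟨x, y⟩, hz, hzmax, htz⟩ := exists_isMaxOn_penalized_le
    (Φ := fun z : ℝ × ℝ => f z.1 - ubar z.2) (δ := fun z => (z.1 - z.2) ^ 2)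
    (mk_mem_prod hx₀ hx₀) (by simp)
    (fun t ht => exists_isMaxOn_sub_sub_mul_sq hf hub hub0 ht hx₀ hR)
    (ε := min ((b - c) ^ 2) (d * V / (8 * a))) (lt_min (pow_pos (sub_pos.2 hb) 2) (by positivity))
  obtain ⟨hxc, hyc⟩ : c ≤ x ∧ c ≤ y := hz
  have hΨ : V ≤ f x - ubar y - t * (x - y) ^ 2 := by
    simpa [V] using isMaxOn_iff.1 hzmax (x₀, x₀) (mk_mem_prod hx₀ hx₀)
  have hpen : 0 ≤ t * (x - y) ^ 2 := by positivity
  have hw : 0 < η * bracketRpow (d / r) (p + r * x) := mul_pos hη (bracketRpow_pos _ _)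
  have hxb : c + (x - y) ≤ b := by
    have : (x - y) ^ 2 ≤ (b - c) ^ 2 := by nlinarith [min_le_left ((b - c) ^ 2) (d * V / (8 * a))]
    linarith [le_of_sq_le_sq this (sub_pos.2 hb).le]
  have hx : c < x := by
    refine hxc.lt_of_ne fun hcx => ?_
    subst hcx
    simp only [f, hus_bdry] at hΨ
    linarith [hub0 y hyc]
  have hy : c < y := by
    refine hyc.lt_of_ne fun hcy => ?_
    rw [← hcy] at hxb hΨ hpen
    have hux : usub x < min ε V := hsmall ⟨hxc, by linarith⟩
    have := hux.trans_le (min_le_right _ _)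
    simp only [f, hub_bdry] at hΨ
    linarith
  have hest := doubling_max_estimate (t := t) (ε := ε) hp hlam hd hr hra hsub hsuper hus hub
    (by linarith) hη
    (by positivity) hx hy (by simp only [f] at hΨ; linarith)
    (fun z hz => by
      have huz : usub z < min ε V := hsmall ⟨hz.1, by linarith [hz.2]⟩
      exact huz.le.trans (min_le_left _ _))
    hzmax
  have h₁ : 2 * a * (t * (x - y) ^ 2) ≤ d * V / 4 := by
    have := htz.trans (min_le_right _ _)
    rw [le_div_iff₀ (by positivity)] at this
    linarith
  have h₂ : lam * ε ≤ d * V / 4 := by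
    rw [mul_div_assoc', div_le_div_iff₀ (by positivity) (by norm_num)]
    nlinarith [mul_pos hd hV]
  have : d * V ≤ d * V / 4 + d * V / 4 :=
    calc d * V ≤ d * (usub x - η * bracketRpow (d / r) (p + r * x) - ubar y) :=
          mul_le_mul_of_nonneg_left (by simp only [f] at hΨ; linarith) hd.le
      _ ≤ 2 * a * (t * (x - y) ^ 2) + lam * ε := hest
      _ ≤ d * V / 4 + d * V / 4 := add_le_add h₁ h₂
  linarith [mul_pos hd hV]

theorem stmt0_general
    (p lam d r a : ℝ) (hp : 0 < p) (hlam : 0 < lam) (hd : 0 < d)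
    (hr : 0 < r) (hra : r < a) (hrd : r < d)
    (mu : Measure ℝ) [IsProbabilityMeasure mu]
    (ubar usub : ℝ → ℝ)
    (hub_nonneg : ∀ x ∈ Set.Ici (-(p / a)), 0 ≤ ubar x)
    (hub_cont : ContinuousOn ubar (Set.Ici (-(p / a))))
    (hus_cont : ContinuousOn usub (Set.Ici (-(p / a))))
    (hub_bdry : ubar (-(p / a)) = 0) (hus_bdry : usub (-(p / a)) = 0)
    (hus_growth : LinGrowth p a usub)
    (hsuper : IsViscSupersol p lam d r a mu ubar (Set.Ioi (-(p / a))))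
    (hsub : IsViscSubsol p lam d r a mu usub (Set.Ioi (-(p / a)))) :
    ∀ x : ℝ, -(p / a) ≤ x → usub x ≤ ubar x := by
  intro x hx
  refine le_of_forall_pos_le_add fun ε hε => ?_
  have hw := bracketRpow_pos (d / r) (p + r * x)
  have := hsub.le_add_mul_bracketRpow hsuper hp.le hlam.le hd hr hra.le hrd hus_cont hub_cont
    hub_nonneg hus_bdry hub_bdry hus_growth (div_pos hε hw) hx
  rwa [div_mul_cancel₀ _ hw.ne'] at this

theorem stmt0
    (p lam d r a : ℝ) (hp : 0 < p) (hlam : 0 < lam) (hd : 0 < d)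
    (hr : 0 < r) (hra : r < a) (hrd : r < d)
    (mu : Measure ℝ) [IsProbabilityMeasure mu] (hmu : mu (Set.Iic 0) = 0)
    (ubar usub : ℝ → ℝ)
    (hub_nonneg : ∀ x ∈ Set.Ici (-(p / a)), 0 ≤ ubar x)
    (hus_nonneg : ∀ x ∈ Set.Ici (-(p / a)), 0 ≤ usub x)
    (hub_cont : ContinuousOn ubar (Set.Ici (-(p / a))))
    (hus_cont : ContinuousOn usub (Set.Ici (-(p / a))))
    (hub_lip : LocLipOn (Set.Ioi (-(p / a))) ubar)
    (hus_lip : LocLipOn (Set.Ioi (-(p / a))) usub)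
    (hub_bdry : ubar (-(p / a)) = 0) (hus_bdry : usub (-(p / a)) = 0)
    (hub_growth : LinGrowth p a ubar) (hus_growth : LinGrowth p a usub)
    (hsuper : IsViscSupersol p lam d r a mu ubar (Set.Ioi (-(p / a))))
    (hsub : IsViscSubsol p lam d r a mu usub (Set.Ioi (-(p / a)))) :
    ∀ x : ℝ, -(p / a) ≤ x → usub x ≤ ubar x :=
  stmt0_general p lam d r a hp hlam hd hr hra hrd mu ubar usub hub_nonneg hub_cont hus_cont hub_bdry
    hus_bdry hus_growth hsuper hsub
end
end

section
/- Fix x₀ ∈ (−p/α,∞), let g : [−p/α, x₀] → [0,∞) be continuous and nondecreasing with g(x₀) > 0, and set h = (p + α·x₀·1{x₀<0})/(2(2λ+δ)). For a bounded, continuous, nondecreasing, positive function w on [x₀, x₀+h), define T_w(x) = g(x₀) + ∫_{x₀}^{x} [ (λ+δ)·w(s) − λ·∫_{(0, s−x₀]} w(s−y) dμ(y) − λ·∫_{(s−x₀, s+p/α]} g(s−y) dμ(y) ] / c(s) ds for x ∈ [x₀, x₀+h). Then for any two bounded, continuous, nondecreasing, positive functions w₁, w₂ on [x₀, x₀+h),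 sup_{x ∈ [x₀, x₀+h)} |T_{w₁}(x) − T_{w₂}(x)| ≤ (1/2)·sup_{x ∈ [x₀, x₀+h)} |w₁(x) − w₂(x)|. -/
open MeasureTheory Set Filter

noncomputable section

/-- The operator T_w of Lemma 4.2's contraction argument. -/
def Tcontract (p lam d r a x₀ : ℝ) (mu : Measure ℝ) (g w : ℝ → ℝ) (x : ℝ) : ℝ :=
  g x₀ + ∫ s in x₀..x,
    ((lam + d) * w s - lam * (∫ y in Set.Ioc (0 : ℝ) (s - x₀), w (s - y) ∂mu)
        - lam * (∫ y in Set.Ioc (s - x₀) (s + p / a), g (s - y) ∂mu))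
      / drift p r a s

/-!
In `T_{w₁}(x) - T_{w₂}(x)` the constant `g(x₀)` and the `g`-integrals cancel, leaving the integral
over `[x₀, x]` of `((λ+δ)(w₁ - w₂)(s) - λ ∫_{(0, s-x₀]} (w₁ - w₂)(s - y) dμ(y)) / c(s)`. Since `μ`
is a probability measure and `c` is nondecreasing, this integrand is bounded by
`(2λ+δ) sup |w₁ - w₂| / c(x₀)`, and `x - x₀ < h ≤ c(x₀) / (2(2λ+δ))` gives the factor `1/2`.
The integrands are integrable because the parametric integrals over `(l(s), u(s)]` are measurable
in `s` (product measurability), once `w` and `g` are extended by zero off their domains.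
-/

section Contraction

variable {p lam d r a x₀ x s : ℝ} {mu : Measure ℝ} {g w w₁ w₂ : ℝ → ℝ}

lemma drift_monotone (hr : 0 ≤ r) (hra : r ≤ a) : Monotone (drift p r a) := by
  intro x y hxy
  unfold drift
  split_ifs <;> nlinarith

lemma drift_pos (hp : 0 < p) (hr : 0 ≤ r) (hra : r ≤ a) (hx : -(p / a) < x) :
    0 < drift p r a x := by
  unfold drift
  split_ifs with hx0
  · nlinarith [mul_nonneg hr hx0]
  · obtain ha | ha := (hr.trans hra).eq_or_lt
    · simp only [← ha, div_zero, neg_zero] at hx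
      linarith
    · nlinarith [mul_lt_mul_of_pos_left hx ha, mul_div_cancel₀ p ha.ne']

lemma add_mul_ite_le_drift (hr : 0 ≤ r) :
    p + a * x * (if x < 0 then 1 else 0) ≤ drift p r a x := by
  unfold drift
  split_ifs <;> nlinarith

lemma measurable_drift : Measurable (drift p r a) :=
  Measurable.ite (measurableSet_le measurable_const measurable_id) (by fun_prop) (by fun_prop)

theorem stronglyMeasurable_setIntegral_Ioc {α E : Type*} [MeasurableSpace α]
    [NormedAddCommGroup E] [NormedSpace ℝ E] {μ : Measure ℝ} [SFinite μ] {f : α → ℝ → E}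
    (hf : StronglyMeasurable (Function.uncurry f)) {l u : α → ℝ} (hl : Measurable l)
    (hu : Measurable u) :
    StronglyMeasurable fun t => ∫ y in Ioc (l t) (u t), f t y ∂μ := by
  have hset : MeasurableSet {z : α × ℝ | l z.1 < z.2 ∧ z.2 ≤ u z.1} :=
    (measurableSet_lt (hl.comp measurable_fst) measurable_snd).inter
      (measurableSet_le measurable_snd (hu.comp measurable_fst))
  simp_rw [← integral_indicator measurableSet_Ioc]
  exact (hf.indicator hset).integral_prod_right'

lemma norm_setIntegral_le_of_forall_norm_le {X E : Type*} [MeasurableSpace X]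
    [NormedAddCommGroup E] [NormedSpace ℝ E] {μ : Measure X} [IsProbabilityMeasure μ] {t : Set X}
    {f : X → E} {C : ℝ} (hC0 : 0 ≤ C) (hC : ∀ y ∈ t, ‖f y‖ ≤ C) : ‖∫ y in t, f y ∂μ‖ ≤ C :=
  (norm_setIntegral_le_of_norm_le_const (measure_lt_top μ t) hC).trans
    (mul_le_of_le_one_right hC0 measureReal_le_one)


def contractIntegrand (p lam d r a x₀ : ℝ) (mu : Measure ℝ) (g w : ℝ → ℝ) (s : ℝ) : ℝ :=
  ((lam + d) * w s - lam * (∫ y in Ioc (0 : ℝ) (s - x₀), w (s - y) ∂mu)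
      - lam * (∫ y in Ioc (s - x₀) (s + p / a), g (s - y) ∂mu)) / drift p r a s

lemma Tcontract_eq_add_integral :
    Tcontract p lam d r a x₀ mu g w x
      = g x₀ + ∫ s in x₀..x, contractIntegrand p lam d r a x₀ mu g w s :=
  rfl

lemma measurable_contractIntegrand [SFinite mu] (hg : Measurable g) (hw : Measurable w) :
    Measurable (contractIntegrand p lam d r a x₀ mu g w) := by
  have hw_int : Measurable fun s => ∫ y in Ioc (0 : ℝ) (s - x₀), w (s - y) ∂mu :=
    (stronglyMeasurable_setIntegral_Ioc (f := fun s y => w (s - y)) (by fun_prop)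
      measurable_const (by fun_prop)).measurable
  have hg_int : Measurable fun s => ∫ y in Ioc (s - x₀) (s + p / a), g (s - y) ∂mu :=
    (stronglyMeasurable_setIntegral_Ioc (f := fun s y => g (s - y)) (by fun_prop)
      (by fun_prop) (by fun_prop)).measurable
  unfold contractIntegrand
  exact (((measurable_const.mul hw).sub (measurable_const.mul hw_int)).sub
    (measurable_const.mul hg_int)).div measurable_drift

lemma contractIntegrand_eqOn {g' w' : ℝ → ℝ} (hg : EqOn g g' (Icc (-(p / a)) x₀))
    (hw : EqOn w w' (Icc x₀ x)) :
    EqOn (contractIntegrand p lam d r a x₀ mu g w) (contractIntegrand p lam d r a x₀ mu g' w')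
      (Icc x₀ x) := by
  intro s hs
  have hw_int : ∫ y in Ioc (0 : ℝ) (s - x₀), w (s - y) ∂mu
      = ∫ y in Ioc (0 : ℝ) (s - x₀), w' (s - y) ∂mu :=
    setIntegral_congr_fun measurableSet_Ioc fun y hy =>
      hw ⟨by linarith [hy.2], by linarith [hy.1, hs.2]⟩
  have hg_int : ∫ y in Ioc (s - x₀) (s + p / a), g (s - y) ∂mu
      = ∫ y in Ioc (s - x₀) (s + p / a), g' (s - y) ∂mu :=
    setIntegral_congr_fun measurableSet_Ioc fun y hy =>
      hg ⟨by linarith [hy.2], by linarith [hy.1]⟩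
  simp only [contractIntegrand, hw hs, hw_int, hg_int]

lemma abs_contractIntegrand_le [IsProbabilityMeasure mu] (hlam : 0 ≤ lam) (hd : 0 ≤ d)
    (hs : x₀ ≤ s) (hc : 0 < drift p r a s) {Mg Mw : ℝ} (hMg : 0 ≤ Mg)
    (hg : ∀ t ∈ Icc (-(p / a)) x₀, |g t| ≤ Mg) (hw : ∀ t ∈ Icc x₀ s, |w t| ≤ Mw) :
    |contractIntegrand p lam d r a x₀ mu g w s|
      ≤ ((2 * lam + d) * Mw + lam * Mg) / drift p r a s := by
  have hMw : |w s| ≤ Mw := hw s ⟨hs, le_rfl⟩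
  have hw_int : ‖∫ y in Ioc (0 : ℝ) (s - x₀), w (s - y) ∂mu‖ ≤ Mw :=
    norm_setIntegral_le_of_forall_norm_le ((abs_nonneg _).trans hMw) fun y hy =>
      hw _ ⟨by linarith [hy.2], by linarith [hy.1]⟩
  have hg_int : ‖∫ y in Ioc (s - x₀) (s + p / a), g (s - y) ∂mu‖ ≤ Mg :=
    norm_setIntegral_le_of_forall_norm_le hMg fun y hy =>
      hg _ ⟨by linarith [hy.2], by linarith [hy.1]⟩
  rw [contractIntegrand, abs_div, abs_of_pos hc]
  gcongr
  calc _ ≤ |(lam + d) * w s| + |lam * ∫ y in Ioc (0 : ℝ) (s - x₀), w (s - y) ∂mu|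
        + |lam * ∫ y in Ioc (s - x₀) (s + p / a), g (s - y) ∂mu| :=
      (abs_sub _ _).trans (add_le_add_left (abs_sub _ _) _)
    _ ≤ (lam + d) * Mw + lam * Mw + lam * Mg := by
      simp only [abs_mul, abs_of_nonneg hlam, abs_of_nonneg (add_nonneg hlam hd)]
      rw [Real.norm_eq_abs] at hw_int hg_int
      gcongr
    _ = (2 * lam + d) * Mw + lam * Mg := by ring


lemma intervalIntegrable_contractIntegrand [IsProbabilityMeasure mu] (hp : 0 < p)
    (hlam : 0 ≤ lam) (hd : 0 ≤ d) (hr : 0 ≤ r) (hra : r ≤ a) (hx₀ : -(p / a) < x₀)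
    (hx : x₀ ≤ x) (hg : ContinuousOn g (Icc (-(p / a)) x₀)) (hw : ContinuousOn w (Icc x₀ x)) :
    IntervalIntegrable (contractIntegrand p lam d r a x₀ mu g w) volume x₀ x := by
  classical
  obtain ⟨Mg, hMg⟩ := isCompact_Icc.exists_bound_of_continuousOn hg
  obtain ⟨Mw, hMw⟩ := isCompact_Icc.exists_bound_of_continuousOn hw
  have hMg0 : 0 ≤ Mg := (norm_nonneg _).trans (hMg x₀ ⟨hx₀.le, le_rfl⟩)
  have hMw0 : 0 ≤ Mw := (norm_nonneg _).trans (hMw x₀ ⟨le_rfl, hx⟩)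
  have hc : 0 < drift p r a x₀ := drift_pos hp hr hra hx₀
  have heq := contractIntegrand_eqOn (p := p) (lam := lam) (d := d) (r := r) (mu := mu)
    (fun t ht => (piecewise_eq_of_mem (Icc (-(p / a)) x₀) g 0 ht).symm)
    (fun t ht => (piecewise_eq_of_mem (Icc x₀ x) w 0 ht).symm)
  have hbound : ∀ s ∈ Icc x₀ x, ‖contractIntegrand p lam d r a x₀ mu g w s‖
      ≤ ((2 * lam + d) * Mw + lam * Mg) / drift p r a x₀ := fun s hs =>
    (abs_contractIntegrand_le hlam hd hs.1 (hc.trans_le (drift_monotone hr hra hs.1)) hMg0 hMg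
      fun t ht => hMw t ⟨ht.1, ht.2.trans hs.2⟩).trans
    (div_le_div_of_nonneg_left (by positivity) hc (drift_monotone hr hra hs.1))
  rw [intervalIntegrable_iff_integrableOn_Icc_of_le hx]
  refine IntegrableOn.congr_fun ?_ heq.symm measurableSet_Icc
  refine Measure.integrableOn_of_bounded (M := ((2 * lam + d) * Mw + lam * Mg) / drift p r a x₀)
    measure_Icc_lt_top.ne (measurable_contractIntegrand ?_ ?_).aestronglyMeasurable ?_
  · exact hg.measurable_piecewise continuousOn_const measurableSet_Icc
  · exact hw.measurable_piecewise continuousOn_const measurableSet_Icc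
  · filter_upwards [ae_restrict_mem measurableSet_Icc] with s hs
    exact heq hs ▸ hbound s hs


lemma integrableOn_comp_sub_Ioc [IsFiniteMeasure mu] (hw : ContinuousOn w (Icc x₀ x))
    (hs : s ≤ x) : IntegrableOn (fun y => w (s - y)) (Ioc 0 (s - x₀)) mu := by
  refine (ContinuousOn.integrableOn_Icc ?_).mono_set Ioc_subset_Icc_self
  exact hw.comp (continuousOn_const.sub continuousOn_id) fun y hy =>
    ⟨by linarith [hy.2], by linarith [hy.1]⟩

lemma contractIntegrand_sub
    (hw₁ : IntegrableOn (fun y => w₁ (s - y)) (Ioc 0 (s - x₀)) mu)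
    (hw₂ : IntegrableOn (fun y => w₂ (s - y)) (Ioc 0 (s - x₀)) mu) :
    contractIntegrand p lam d r a x₀ mu g w₁ s - contractIntegrand p lam d r a x₀ mu g w₂ s
      = contractIntegrand p lam d r a x₀ mu 0 (w₁ - w₂) s := by
  simp only [contractIntegrand, Pi.sub_apply, Pi.zero_apply, integral_zero,
    integral_sub hw₁ hw₂]
  ring

lemma Tcontract_sub [IsProbabilityMeasure mu] (hp : 0 < p) (hlam : 0 ≤ lam) (hd : 0 ≤ d)
    (hr : 0 ≤ r) (hra : r ≤ a) (hx₀ : -(p / a) < x₀) (hx : x₀ ≤ x)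
    (hg : ContinuousOn g (Icc (-(p / a)) x₀)) (hw₁ : ContinuousOn w₁ (Icc x₀ x))
    (hw₂ : ContinuousOn w₂ (Icc x₀ x)) :
    Tcontract p lam d r a x₀ mu g w₁ x - Tcontract p lam d r a x₀ mu g w₂ x
      = ∫ s in x₀..x, contractIntegrand p lam d r a x₀ mu 0 (w₁ - w₂) s := by
  rw [Tcontract_eq_add_integral, Tcontract_eq_add_integral, add_sub_add_left_eq_sub,
    ← intervalIntegral.integral_sub
      (intervalIntegrable_contractIntegrand hp hlam hd hr hra hx₀ hx hg hw₁)
      (intervalIntegrable_contractIntegrand hp hlam hd hr hra hx₀ hx hg hw₂)]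
  refine intervalIntegral.integral_congr fun s hs => ?_
  rw [uIcc_of_le hx] at hs
  exact contractIntegrand_sub (integrableOn_comp_sub_Ioc hw₁ hs.2)
    (integrableOn_comp_sub_Ioc hw₂ hs.2)

theorem abs_Tcontract_sub_le [IsProbabilityMeasure mu] (hp : 0 < p) (hlam : 0 ≤ lam)
    (hd : 0 ≤ d) (hr : 0 ≤ r) (hra : r ≤ a) (hx₀ : -(p / a) < x₀) (hx : x₀ ≤ x)
    (hg : ContinuousOn g (Icc (-(p / a)) x₀)) (hw₁ : ContinuousOn w₁ (Icc x₀ x))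
    (hw₂ : ContinuousOn w₂ (Icc x₀ x)) {M : ℝ} (hM : ∀ t ∈ Icc x₀ x, |w₁ t - w₂ t| ≤ M) :
    |Tcontract p lam d r a x₀ mu g w₁ x - Tcontract p lam d r a x₀ mu g w₂ x|
      ≤ (2 * lam + d) * M / drift p r a x₀ * (x - x₀) := by
  have hc : 0 < drift p r a x₀ := drift_pos hp hr hra hx₀
  have hM0 : 0 ≤ M := (abs_nonneg _).trans (hM x₀ ⟨le_rfl, hx⟩)
  have hbound : ∀ s ∈ uIoc x₀ x,
      ‖contractIntegrand p lam d r a x₀ mu 0 (w₁ - w₂) s‖ ≤ (2 * lam + d) * M / drift p r a x₀ := by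
    intro s hs
    rw [uIoc_of_le hx] at hs
    have hcs : drift p r a x₀ ≤ drift p r a s := drift_monotone hr hra hs.1.le
    calc _ ≤ ((2 * lam + d) * M + lam * 0) / drift p r a s :=
          abs_contractIntegrand_le hlam hd hs.1.le (hc.trans_le hcs) le_rfl
            (fun t _ => by simp) fun t ht => hM t ⟨ht.1, ht.2.trans hs.2⟩
      _ ≤ (2 * lam + d) * M / drift p r a x₀ := by
          rw [mul_zero, add_zero]
          exact div_le_div_of_nonneg_left (by positivity) hc hcs
  rw [Tcontract_sub hp hlam hd hr hra hx₀ hx hg hw₁ hw₂, ← Real.norm_eq_abs, ← abs_of_nonneg (sub_nonneg.2 hx)]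
  exact intervalIntegral.norm_integral_le_of_norm_le_const hbound

end Contraction

theorem stmt5_general
    (p lam d r a : ℝ) (hp : 0 < p) (hlam : 0 < lam) (hd : 0 < d)
    (hr : 0 < r) (hra : r < a)
    (mu : Measure ℝ) [IsProbabilityMeasure mu]
    (x₀ : ℝ) (hx₀ : -(p / a) < x₀)
    (g : ℝ → ℝ)
    (hg_cont : ContinuousOn g (Set.Icc (-(p / a)) x₀))
    (h : ℝ) (hh : h = (p + a * x₀ * (if x₀ < 0 then (1 : ℝ) else 0)) / (2 * (2 * lam + d)))
    (w₁ w₂ : ℝ → ℝ)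
    (hw₁_bdd : ∃ M : ℝ, ∀ x ∈ Set.Ico x₀ (x₀ + h), |w₁ x| ≤ M)
    (hw₂_bdd : ∃ M : ℝ, ∀ x ∈ Set.Ico x₀ (x₀ + h), |w₂ x| ≤ M)
    (hw₁_cont : ContinuousOn w₁ (Set.Ico x₀ (x₀ + h)))
    (hw₂_cont : ContinuousOn w₂ (Set.Ico x₀ (x₀ + h))) :
    sSup ((fun x => |Tcontract p lam d r a x₀ mu g w₁ x - Tcontract p lam d r a x₀ mu g w₂ x|) ''
        Set.Ico x₀ (x₀ + h))
      ≤ (1 / 2) * sSup ((fun x => |w₁ x - w₂ x|) '' Set.Ico x₀ (x₀ + h)) := by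
  obtain ⟨M₁, hM₁⟩ := hw₁_bdd
  obtain ⟨M₂, hM₂⟩ := hw₂_bdd
  set M := sSup ((fun x => |w₁ x - w₂ x|) '' Ico x₀ (x₀ + h))
  have hM : ∀ t ∈ Ico x₀ (x₀ + h), |w₁ t - w₂ t| ≤ M := fun t ht =>
    le_csSup ⟨M₁ + M₂, forall_mem_image.2 fun t ht =>
      (abs_sub _ _).trans (add_le_add (hM₁ t ht) (hM₂ t ht))⟩ (mem_image_of_mem _ ht)
  have hc : 0 < drift p r a x₀ := drift_pos hp hr.le hra.le hx₀
  have hh_le : (2 * lam + d) * h ≤ drift p r a x₀ / 2 := by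
    have : (2 * lam + d) * h = (p + a * x₀ * (if x₀ < 0 then (1 : ℝ) else 0)) / 2 := by
      rw [hh]; field_simp
    linarith [add_mul_ite_le_drift (p := p) (a := a) (x := x₀) hr.le]
  refine Real.sSup_le (forall_mem_image.2 fun x hx => ?_)
    (mul_nonneg (by norm_num) (Real.sSup_nonneg fun _ ⟨_, _, ht⟩ => ht ▸ abs_nonneg _))
  have hIcc : Icc x₀ x ⊆ Ico x₀ (x₀ + h) := Icc_subset_Ico_right hx.2
  have hM0 : 0 ≤ M := (abs_nonneg _).trans (hM x hx)
  calc _ ≤ (2 * lam + d) * M / drift p r a x₀ * (x - x₀) :=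
        abs_Tcontract_sub_le hp hlam.le hd.le hr.le hra.le hx₀ hx.1 hg_cont
          (hw₁_cont.mono hIcc) (hw₂_cont.mono hIcc) fun t ht => hM t (hIcc ht)
    _ ≤ (2 * lam + d) * M / drift p r a x₀ * h := by gcongr; linarith [hx.2]
    _ ≤ 1 / 2 * M := by
        rw [div_mul_eq_mul_div, div_le_iff₀ hc]
        nlinarith [mul_le_mul_of_nonneg_left hh_le hM0]

theorem stmt5
    (p lam d r a : ℝ) (hp : 0 < p) (hlam : 0 < lam) (hd : 0 < d)
    (hr : 0 < r) (hra : r < a) (hrd : r < d)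
    (mu : Measure ℝ) [IsProbabilityMeasure mu] (hmu : mu (Set.Iic 0) = 0)
    (x₀ : ℝ) (hx₀ : -(p / a) < x₀)
    (g : ℝ → ℝ)
    (hg_cont : ContinuousOn g (Set.Icc (-(p / a)) x₀))
    (hg_mono : MonotoneOn g (Set.Icc (-(p / a)) x₀))
    (hg_nonneg : ∀ x ∈ Set.Icc (-(p / a)) x₀, 0 ≤ g x)
    (hg_pos : 0 < g x₀)
    (h : ℝ) (hh : h = (p + a * x₀ * (if x₀ < 0 then (1 : ℝ) else 0)) / (2 * (2 * lam + d)))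
    (w₁ w₂ : ℝ → ℝ)
    (hw₁_bdd : ∃ M : ℝ, ∀ x ∈ Set.Ico x₀ (x₀ + h), |w₁ x| ≤ M)
    (hw₂_bdd : ∃ M : ℝ, ∀ x ∈ Set.Ico x₀ (x₀ + h), |w₂ x| ≤ M)
    (hw₁_cont : ContinuousOn w₁ (Set.Ico x₀ (x₀ + h)))
    (hw₂_cont : ContinuousOn w₂ (Set.Ico x₀ (x₀ + h)))
    (hw₁_mono : MonotoneOn w₁ (Set.Ico x₀ (x₀ + h)))
    (hw₂_mono : MonotoneOn w₂ (Set.Ico x₀ (x₀ + h)))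
    (hw₁_pos : ∀ x ∈ Set.Ico x₀ (x₀ + h), 0 < w₁ x)
    (hw₂_pos : ∀ x ∈ Set.Ico x₀ (x₀ + h), 0 < w₂ x) :
    sSup ((fun x => |Tcontract p lam d r a x₀ mu g w₁ x - Tcontract p lam d r a x₀ mu g w₂ x|) ''
        Set.Ico x₀ (x₀ + h))
      ≤ (1 / 2) * sSup ((fun x => |w₁ x - w₂ x|) '' Set.Ico x₀ (x₀ + h)) :=
  stmt5_general p lam d r a hp hlam hd hr hra mu x₀ hx₀ g hg_cont h hh w₁ w₂ hw₁_bdd hw₂_bdd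
    hw₁_cont hw₂_cont
end
end

section
/- Assume α > λ+δ and let −p/α < x₁ < x₂ < 0. Suppose V : [−p/α, x₂) → [0,∞) is continuous, nondecreasing, differentiable at every point of [x₁, x₂), satisfies V′(x₁) = 1, and satisfies (p + α·x)·V′(x) = (λ+δ)·V(x) − λ·I_V(x) for all x ∈ [x₁, x₂). Then there exists ε₀ ∈ (0, x₂−x₁) such that V′(x₁+ε) < 1 for all ε ∈ (0, ε₀). -/
open MeasureTheory Set Filter

noncomputable section

open Topology

/-!
At `x₁` the equation reads `p + α x₁ = (λ+δ) V(x₁) − λ I_V(x₁)`, and `I_V` is nondecreasing since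
`V` is nonnegative and nondecreasing. Hence at `x = x₁ + ε`,
`(p + α x) V'(x) ≤ p + α x₁ + (λ+δ) (V(x) − V(x₁))`, and because `V'(x₁) = 1` and `λ+δ < α`,
the increment `(λ+δ) (V(x) − V(x₁))` is below `α ε` for small `ε`, which gives `V'(x) < 1`.
-/

theorem exists_forall_lt_of_eventually_nhdsGT_zero {P : ℝ → Prop} {c : ℝ} (hc : 0 < c)
    (h : ∀ᶠ t in 𝓝[>] 0, P t) :
    ∃ ε₀ : ℝ, 0 < ε₀ ∧ ε₀ < c ∧ ∀ ε : ℝ, 0 < ε → ε < ε₀ → P ε := by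
  obtain ⟨u, hu, hsub⟩ := mem_nhdsGT_iff_exists_Ioo_subset.mp h
  refine ⟨min u (c / 2), lt_min hu (half_pos hc), (min_le_right _ _).trans_lt (half_lt_self hc),
    fun ε hε hεu => hsub ⟨hε, hεu.trans_le (min_le_left _ _)⟩⟩

section Iop

variable {p a c : ℝ} {mu : Measure ℝ} {V : ℝ → ℝ}

theorem sub_mem_Ico_of_mem_Ioc {x u : ℝ} (hxc : x < c) (hu : u ∈ Ioc 0 (x + p / a)) :
    x - u ∈ Ico (-(p / a)) c :=
  ⟨by linarith [hu.2], by linarith [hu.1]⟩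

theorem integrableOn_Iop_integrand [IsFiniteMeasure mu]
    (hcont : ContinuousOn V (Ico (-(p / a)) c)) (hnonneg : ∀ x ∈ Ico (-(p / a)) c, 0 ≤ V x)
    (hmono : MonotoneOn V (Ico (-(p / a)) c)) {x : ℝ} (hx : x ∈ Ico (-(p / a)) c) :
    IntegrableOn (fun u => V (x - u)) (Ioc 0 (x + p / a)) mu := by
  have hmaps : MapsTo (fun u => x - u) (Ioc 0 (x + p / a)) (Ico (-(p / a)) c) :=
    fun u hu => sub_mem_Ico_of_mem_Ioc hx.2 hu
  refine Integrable.mono' (integrable_const (V x))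
    ((hcont.comp (by fun_prop) hmaps).aestronglyMeasurable measurableSet_Ioc) ?_
  rw [ae_restrict_iff' measurableSet_Ioc]
  filter_upwards with u hu
  rw [Real.norm_eq_abs, abs_of_nonneg (hnonneg _ (hmaps hu))]
  exact hmono (hmaps hu) hx (by linarith [hu.1])

theorem Iop_le_Iop [IsFiniteMeasure mu]
    (hcont : ContinuousOn V (Ico (-(p / a)) c)) (hnonneg : ∀ x ∈ Ico (-(p / a)) c, 0 ≤ V x)
    (hmono : MonotoneOn V (Ico (-(p / a)) c)) {x y : ℝ} (hx : -(p / a) ≤ x) (hxy : x ≤ y)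
    (hy : y < c) : Iop p a mu V x ≤ Iop p a mu V y := by
  have hxc : x < c := hxy.trans_lt hy
  have hIoc : Ioc (0 : ℝ) (x + p / a) ⊆ Ioc 0 (y + p / a) := Ioc_subset_Ioc_right (by linarith)
  have hint_y := integrableOn_Iop_integrand (mu := mu) hcont hnonneg hmono ⟨hx.trans hxy, hy⟩
  calc ∫ u in Ioc 0 (x + p / a), V (x - u) ∂mu
      ≤ ∫ u in Ioc 0 (x + p / a), V (y - u) ∂mu :=
        setIntegral_mono_on (integrableOn_Iop_integrand hcont hnonneg hmono ⟨hx, hxc⟩)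
          (hint_y.mono_set hIoc) measurableSet_Ioc fun u hu =>
          hmono (sub_mem_Ico_of_mem_Ioc hxc hu) (sub_mem_Ico_of_mem_Ioc hy (hIoc hu))
            (by linarith)
    _ ≤ ∫ u in Ioc 0 (y + p / a), V (y - u) ∂mu := by
        refine setIntegral_mono_set hint_y ?_ hIoc.eventuallyLE
        rw [EventuallyLE, ae_restrict_iff' measurableSet_Ioc]
        filter_upwards with u hu
        exact hnonneg _ (sub_mem_Ico_of_mem_Ioc hy hu)

end Iop

theorem deriv_lt_one_of_increment_lt {p lam d a : ℝ} {mu : Measure ℝ} {V : ℝ → ℝ} {y₁ y : ℝ}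
    (ha : 0 < a) (hlam : 0 ≤ lam) (hy : -(p / a) < y)
    (hI : Iop p a mu V y₁ ≤ Iop p a mu V y)
    (heq₁ : p + a * y₁ = (lam + d) * V y₁ - lam * Iop p a mu V y₁)
    (heq : (p + a * y) * deriv V y = (lam + d) * V y - lam * Iop p a mu V y)
    (hincr : (lam + d) * (V y - V y₁) < a * (y - y₁)) :
    deriv V y < 1 := by
  have hpos : 0 < p + a * y := by
    have := mul_lt_mul_of_pos_left (neg_lt_iff_pos_add.mp hy) ha
    rwa [mul_zero, mul_add, mul_div_cancel₀ p ha.ne', add_comm] at this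
  refine lt_of_mul_lt_mul_left ?_ hpos.le
  nlinarith [mul_le_mul_of_nonneg_left hI hlam]

theorem stmt8_general
    (p lam d a : ℝ) (hlam : 0 < lam) (hd : 0 < d)
    (mu : Measure ℝ) [IsProbabilityMeasure mu]
    (hald : lam + d < a)
    (x₁ x₂ : ℝ) (h1 : -(p / a) < x₁) (h12 : x₁ < x₂)
    (V : ℝ → ℝ)
    (hV_cont : ContinuousOn V (Set.Ico (-(p / a)) x₂))
    (hV_nonneg : ∀ x ∈ Set.Ico (-(p / a)) x₂, 0 ≤ V x)
    (hV_mono : MonotoneOn V (Set.Ico (-(p / a)) x₂))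
    (hV_diff : ∀ x ∈ Set.Ico x₁ x₂, DifferentiableAt ℝ V x)
    (hV1 : deriv V x₁ = 1)
    (heq : ∀ x ∈ Set.Ico x₁ x₂,
      (p + a * x) * deriv V x = (lam + d) * V x - lam * Iop p a mu V x) :
    ∃ ε₀ : ℝ, 0 < ε₀ ∧ ε₀ < x₂ - x₁ ∧
      ∀ ε : ℝ, 0 < ε → ε < ε₀ → deriv V (x₁ + ε) < 1 := by
  have ha : 0 < a := (add_pos hlam hd).trans hald
  have hder : HasDerivAt V 1 x₁ := hV1 ▸ (hV_diff x₁ ⟨le_rfl, h12⟩).hasDerivAt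
  have hincr : ∀ᶠ t in 𝓝[>] 0, (lam + d) * (t⁻¹ * (V (x₁ + t) - V x₁)) < a := by
    refine (hder.tendsto_slope_zero_right.const_mul (lam + d)).eventually_lt_const ?_
    simpa using hald
  have heq₁ := heq x₁ ⟨le_rfl, h12⟩
  rw [hV1, mul_one] at heq₁
  refine exists_forall_lt_of_eventually_nhdsGT_zero (sub_pos.mpr h12) ?_
  filter_upwards [hincr, Ioo_mem_nhdsGT (sub_pos.mpr h12)] with t ht ⟨ht0, htx⟩
  refine deriv_lt_one_of_increment_lt ha hlam.le (by linarith)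
    (Iop_le_Iop hV_cont hV_nonneg hV_mono h1.le (by linarith) (by linarith)) heq₁
    (heq _ ⟨by linarith, by linarith⟩) ?_
  rw [← mul_assoc, mul_comm _ t⁻¹, mul_assoc, inv_mul_lt_iff₀ ht0] at ht
  linarith

theorem stmt8
    (p lam d r a : ℝ) (hp : 0 < p) (hlam : 0 < lam) (hd : 0 < d)
    (hr : 0 < r) (hra : r < a) (hrd : r < d)
    (mu : Measure ℝ) [IsProbabilityMeasure mu] (hmu : mu (Set.Iic 0) = 0)
    (hald : lam + d < a)
    (x₁ x₂ : ℝ) (h1 : -(p / a) < x₁) (h12 : x₁ < x₂) (h2 : x₂ < 0)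
    (V : ℝ → ℝ)
    (hV_cont : ContinuousOn V (Set.Ico (-(p / a)) x₂))
    (hV_nonneg : ∀ x ∈ Set.Ico (-(p / a)) x₂, 0 ≤ V x)
    (hV_mono : MonotoneOn V (Set.Ico (-(p / a)) x₂))
    (hV_diff : ∀ x ∈ Set.Ico x₁ x₂, DifferentiableAt ℝ V x)
    (hV1 : deriv V x₁ = 1)
    (heq : ∀ x ∈ Set.Ico x₁ x₂,
      (p + a * x) * deriv V x = (lam + d) * V x - lam * Iop p a mu V x) :
    ∃ ε₀ : ℝ, 0 < ε₀ ∧ ε₀ < x₂ - x₁ ∧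
      ∀ ε : ℝ, 0 < ε → ε < ε₀ → deriv V (x₁ + ε) < 1 :=
  stmt8_general p lam d a hlam hd mu hald x₁ x₂ h1 h12 V hV_cont hV_nonneg hV_mono hV_diff hV1 heq
end
end

section
/- Assume α > λ+δ and let −p/α < x₀ < x₁ < 0. Suppose V : [−p/α, x₁) → [0,∞) is continuous and nondecreasing, satisfies V(x) = (x − x₀) + V(x₀) for all x ∈ [x₀, x₁), and G_V(x₀) = 0. Then G_V(x) > 0 for every x ∈ (x₀, x₁). -/
open MeasureTheory Set Filter

noncomputable section

theorem stmt9
    (p lam d r a : ℝ) (hp : 0 < p) (hlam : 0 < lam) (hd : 0 < d)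
    (hr : 0 < r) (hra : r < a) (hrd : r < d)
    (mu : Measure ℝ) [IsProbabilityMeasure mu] (hmu : mu (Set.Iic 0) = 0)
    (hald : lam + d < a)
    (x₀ x₁ : ℝ) (h0 : -(p / a) < x₀) (h01 : x₀ < x₁) (h1 : x₁ < 0)
    (V : ℝ → ℝ)
    (hV_cont : ContinuousOn V (Set.Ico (-(p / a)) x₁))
    (hV_nonneg : ∀ x ∈ Set.Ico (-(p / a)) x₁, 0 ≤ V x)
    (hV_mono : MonotoneOn V (Set.Ico (-(p / a)) x₁))
    (hlin : ∀ x ∈ Set.Ico x₀ x₁, V x = (x - x₀) + V x₀)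
    (hG : Gop p lam d r a mu V x₀ = 0) :
    ∀ x ∈ Set.Ioo x₀ x₁, 0 < Gop p lam d r a mu V x := by
  have ha : 0 < a := hr.trans hra
  intro x hx
  obtain ⟨hx0, hx1⟩ := hx
  have hx0m : -(p / a) ≤ x₀ := h0.le
  have hxm : -(p / a) < x := h0.trans hx0
  -- integrability
  have hint : ∀ z : ℝ, -(p / a) ≤ z → z < x₁ →
      IntegrableOn (fun u => V (z - u)) (Set.Ioc 0 (z + p / a)) mu := by
    intro z hz hz1
    have hc : ContinuousOn (fun u => V (z - u)) (Set.Icc 0 (z + p / a)) := by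
      apply hV_cont.comp (Continuous.continuousOn (by continuity))
      intro u hu
      constructor
      · linarith [hu.2]
      · linarith [hu.1]
    exact (hc.integrableOn_compact isCompact_Icc).mono_set Set.Ioc_subset_Icc_self
  have hintx := hint x hxm.le hx1
  have hintx0 : IntegrableOn (fun u => V (x - u)) (Set.Ioc 0 (x₀ + p / a)) mu :=
    hintx.mono_set (Set.Ioc_subset_Ioc_right (by linarith))
  have hI1 : Iop p a mu V x₀ ≤ ∫ u in Set.Ioc (0:ℝ) (x₀ + p / a), V (x - u) ∂mu := by
    apply setIntegral_mono_on (hint x₀ hx0m (hx0.trans hx1)) hintx0 measurableSet_Ioc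
    intro u hu
    apply hV_mono
    · constructor
      · linarith [hu.2]
      · linarith [hu.1, hx0.trans hx1]
    · constructor
      · linarith [hu.2]
      · linarith [hu.1]
    · linarith [hx0.le]
  have hI2 : (∫ u in Set.Ioc (0:ℝ) (x₀ + p / a), V (x - u) ∂mu) ≤ Iop p a mu V x := by
    apply setIntegral_mono_set hintx
    · rw [EventuallyLE, ae_restrict_iff' measurableSet_Ioc]
      refine Filter.Eventually.of_forall (fun u hu => ?_)
      apply hV_nonneg
      constructor
      · linarith [hu.2]
      · linarith [hu.1]
    · exact HasSubset.Subset.eventuallyLE (Set.Ioc_subset_Ioc_right (by linarith))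
  have hI : lam * Iop p a mu V x₀ ≤ lam * Iop p a mu V x :=
    mul_le_mul_of_nonneg_left (hI1.trans hI2) hlam.le
  have hVx : V x = (x - x₀) + V x₀ := hlin x ⟨hx0.le, hx1⟩
  have hdx : drift p r a x = p + a * x := if_neg (by push_neg; linarith)
  have hdx0 : drift p r a x₀ = p + a * x₀ := if_neg (by push_neg; linarith)
  unfold Gop at hG ⊢
  rw [hdx, hVx]
  rw [hdx0] at hG
  nlinarith [hI]
end
end

section
/- Assume α > λ+δ and let V be a standard value-function candidate. Then every point of A ∩ (−p/α, 0) is an isolated point of A: for each x ∈ A ∩ (−p/α, 0) there exists h > 0 such that A ∩ (x−h, x+h) = {x}. -/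
open MeasureTheory Set Filter

noncomputable section

open Topology

/-! Differencing the equations `G_V(u) = 0 = G_V(v)` for `u < v < 0` in `A`, where the drift is
`p + α x`, gives `(λ+δ) (V v - V u) = α (v - u) + λ (I_V v - I_V u) ≥ α (v - u)`, because `I_V` is
nondecreasing. So the difference quotients of `V` between points of `A ∩ (−p/α, 0)` are at least
`α/(λ+δ) > 1`. If `x ∈ A ∩ (−p/α, 0)` were not isolated in `A`, a one-sided sequence of such
quotients at `x` (bounded above by local Lipschitz continuity) would converge to some `ℓ > 1`. But
the derivative-limit property of `V` gives `ℓ c(x) − (λ+δ) V(x) + λ I_V(x) ≤ 0`, which together with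
`G_V(x) = 0` and `c(x) > 0` forces `ℓ ≤ 1`. -/

section IntegralOperator

variable {p a : ℝ} {mu : Measure ℝ} [IsFiniteMeasureOnCompacts mu] {V : ℝ → ℝ}

lemma integrableOn_comp_sub (hcont : ContinuousOn V (Ici (-(p / a)))) (z : ℝ) :
    IntegrableOn (fun u => V (z - u)) (Ioc 0 (z + p / a)) mu := by
  have hc : ContinuousOn (fun u => V (z - u)) (Icc 0 (z + p / a)) :=
    hcont.comp (continuous_const.sub continuous_id).continuousOn fun u hu => by
      simp only [mem_Ici]
      linarith [hu.2]
  exact (hc.integrableOn_compact isCompact_Icc).mono_set Ioc_subset_Icc_self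

lemma monotoneOn_Iop (hcont : ContinuousOn V (Ici (-(p / a))))
    (hnonneg : ∀ x ∈ Ici (-(p / a)), 0 ≤ V x) (hmono : MonotoneOn V (Ici (-(p / a)))) :
    MonotoneOn (Iop p a mu V) (Ici (-(p / a))) := by
  intro u hu v hv huv
  have hIv := integrableOn_comp_sub (mu := mu) hcont v
  calc Iop p a mu V u
      ≤ ∫ t in Ioc 0 (u + p / a), V (v - t) ∂mu := by
        refine setIntegral_mono_on (integrableOn_comp_sub hcont u)
          (hIv.mono_set (Ioc_subset_Ioc_right (by linarith))) measurableSet_Ioc fun t ht => ?_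
        have hvt : v - t ∈ Ici (-(p / a)) := by simp only [mem_Ici]; linarith [ht.2]
        exact hmono (by simp only [mem_Ici]; linarith [ht.2]) hvt (by linarith)
    _ ≤ Iop p a mu V v := by
        refine setIntegral_mono_set hIv ?_
          (Ioc_subset_Ioc_right (by linarith : u + p / a ≤ v + p / a)).eventuallyLE
        filter_upwards [ae_restrict_mem measurableSet_Ioc] with t ht
        exact hnonneg _ (by simp only [mem_Ici]; linarith [ht.2])

end IntegralOperator

lemma drift_pos_of_neg {p r a x : ℝ} (ha : 0 < a) (hx : -(p / a) < x) (hx0 : x < 0) :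
    0 < drift p r a x := by
  rw [drift, if_neg hx0.not_ge]
  have := mul_lt_mul_of_pos_left hx ha
  rw [mul_neg, mul_div_cancel₀ _ ha.ne'] at this
  linarith

section SetA

variable {p lam d r a : ℝ} {mu : Measure ℝ} {V : ℝ → ℝ}

lemma mul_sub_le_of_mem_setA (hlam : 0 ≤ lam) (hI : MonotoneOn (Iop p a mu V) (Ici (-(p / a))))
    {u v : ℝ} (hu : u ∈ setA p lam d r a mu V) (hv : v ∈ setA p lam d r a mu V)
    (huv : u ≤ v) (hv0 : v < 0) :
    a * (v - u) ≤ (lam + d) * (V v - V u) := by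
  obtain ⟨huI, huG⟩ := hu
  obtain ⟨hvI, hvG⟩ := hv
  have hIuv := mul_le_mul_of_nonneg_left (hI huI hvI huv) hlam
  rw [Gop, drift, if_neg (huv.trans_lt hv0).not_ge] at huG
  rw [Gop, drift, if_neg hv0.not_ge] at hvG
  linarith

lemma div_le_div_sub_of_mem_setA (hlam : 0 ≤ lam) (hld : 0 < lam + d)
    (hI : MonotoneOn (Iop p a mu V) (Ici (-(p / a)))) {x y : ℝ}
    (hx : x ∈ setA p lam d r a mu V) (hy : y ∈ setA p lam d r a mu V)
    (hx0 : x < 0) (hy0 : y < 0) (hxy : y ≠ x) :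
    a / (lam + d) ≤ (V y - V x) / (y - x) := by
  rw [div_le_iff₀ hld]
  rcases hxy.lt_or_gt with hlt | hgt
  · have hswap : (V y - V x) / (y - x) = (V x - V y) / (x - y) := by
      rw [← neg_div_neg_eq, neg_sub, neg_sub]
    rw [hswap, div_mul_eq_mul_div, le_div_iff₀ (sub_pos.2 hlt)]
    linarith [mul_sub_le_of_mem_setA hlam hI hy hx hlt.le hx0]
  · rw [div_mul_eq_mul_div, le_div_iff₀ (sub_pos.2 hgt)]
    linarith [mul_sub_le_of_mem_setA hlam hI hx hy hgt.le hy0]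

lemma le_one_of_mem_setA {x dd : ℝ} (hx : x ∈ setA p lam d r a mu V) (hc : 0 < drift p r a x)
    (hdd : dd * drift p r a x - (lam + d) * V x + lam * Iop p a mu V x ≤ 0) : dd ≤ 1 := by
  have hG := hx.2
  rw [Gop] at hG
  nlinarith

end SetA

lemma div_sub_le_of_lipschitzOnWith {f : ℝ → ℝ} {K : NNReal} {s : Set ℝ}
    (hf : LipschitzOnWith K f s) {x y : ℝ} (hx : x ∈ s) (hy : y ∈ s) :
    (f y - f x) / (y - x) ≤ K :=
  calc (f y - f x) / (y - x) ≤ |(f y - f x) / (y - x)| := le_abs_self _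
    _ = |f y - f x| / |y - x| := abs_div _ _
    _ ≤ K := div_le_of_le_mul₀ (abs_nonneg _) K.coe_nonneg (hf.norm_sub_le hy hx)

lemma exists_seq_tendsto_div_of_mem_closure (f : ℝ → ℝ) {T K : Set ℝ} {x : ℝ}
    (hK : IsCompact K) (hx : x ∈ closure T) (hf : ∀ y ∈ T, (f y - f x) / (y - x) ∈ K) :
    ∃ h : ℕ → ℝ, ∃ dd ∈ K, (∀ n, x + h n ∈ T) ∧ Tendsto h atTop (𝓝 0) ∧
      Tendsto (fun n => (f (x + h n) - f x) / h n) atTop (𝓝 dd) := by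
  obtain ⟨y, hyT, hyx⟩ := mem_closure_iff_seq_limit.1 hx
  obtain ⟨dd, hdd, φ, hφ, hlim⟩ := hK.tendsto_subseq fun n => hf _ (hyT n)
  refine ⟨fun n => y (φ n) - x, dd, hdd, fun n => by simpa using hyT (φ n), ?_,
    by simpa [Function.comp_def] using hlim⟩
  simpa using (hyx.comp hφ.tendsto_atTop).sub_const x

lemma exists_oneSided_seq_tendsto_div (f : ℝ → ℝ) {S K : Set ℝ} {x : ℝ} (hK : IsCompact K)
    (hx : x ∈ closure (S \ {x})) (hf : ∀ y ∈ S \ {x}, (f y - f x) / (y - x) ∈ K) :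
    ∃ h : ℕ → ℝ, ∃ dd ∈ K, ((∀ n, 0 < h n) ∨ (∀ n, h n < 0)) ∧ Tendsto h atTop (𝓝 0) ∧
      Tendsto (fun n => (f (x + h n) - f x) / h n) atTop (𝓝 dd) := by
  rw [sdiff_eq, ← Iio_union_Ioi, inter_union_distrib_left, closure_union] at hx
  have hf' : ∀ y ∈ S ∩ (Iio x ∪ Ioi x), (f y - f x) / (y - x) ∈ K := by
    rwa [Iio_union_Ioi, ← sdiff_eq]
  rcases hx with hx | hx
  · obtain ⟨h, dd, hdd, hT, h0, hlim⟩ := exists_seq_tendsto_div_of_mem_closure f hK hx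
      fun y hy => hf' y ⟨hy.1, Or.inl hy.2⟩
    exact ⟨h, dd, hdd, Or.inr fun n => by linarith [(hT n).2.out], h0, hlim⟩
  · obtain ⟨h, dd, hdd, hT, h0, hlim⟩ := exists_seq_tendsto_div_of_mem_closure f hK hx
      fun y hy => hf' y ⟨hy.1, Or.inr hy.2⟩
    exact ⟨h, dd, hdd, Or.inl fun n => by linarith [(hT n).2.out], h0, hlim⟩

lemma exists_inter_Ioo_eq_singleton {s : Set ℝ} {x ε : ℝ} (hε : 0 < ε) (hx : x ∈ s)
    (hiso : x ∉ closure ((s ∩ Metric.ball x ε) \ {x})) :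
    ∃ h : ℝ, 0 < h ∧ s ∩ Ioo (x - h) (x + h) = {x} := by
  rw [Metric.mem_closure_iff] at hiso
  push Not at hiso
  obtain ⟨ε', hε', hfar⟩ := hiso
  refine ⟨min ε ε', lt_min hε hε', eq_singleton_iff_unique_mem.2 ⟨⟨hx, ?_⟩, fun y hy => ?_⟩⟩
  · rw [← Real.ball_eq_Ioo]
    exact Metric.mem_ball_self (lt_min hε hε')
  · rw [← Real.ball_eq_Ioo] at hy
    by_contra hyx
    have hball : dist y x < min ε ε' := hy.2
    have := hfar y ⟨⟨hy.1, Metric.mem_ball.2 (hball.trans_le (min_le_left _ _))⟩, hyx⟩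
    rw [dist_comm] at this
    linarith [min_le_right ε ε']

theorem stmt10_general
    (p lam d r a : ℝ) (hlam : 0 < lam) (hd : 0 < d)
    (mu : Measure ℝ) [IsProbabilityMeasure mu]
    (hald : lam + d < a)
    (V : ℝ → ℝ) (hV : IsCandidate p lam d r a mu V) :
    ∀ x ∈ setA p lam d r a mu V ∩ Set.Ioo (-(p / a)) 0,
      ∃ h : ℝ, 0 < h ∧
        setA p lam d r a mu V ∩ Set.Ioo (x - h) (x + h) = {x} := by
  rintro x ⟨hxA, hx_gt, hx_lt⟩
  have hld : 0 < lam + d := by linarith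
  have hI := monotoneOn_Iop (mu := mu) hV.cont hV.nonneg hV.mono
  obtain ⟨K, eps, heps, hLip⟩ := hV.locLip x hx_gt
  set ε := min eps (min (x + p / a) (-x))
  have hε : 0 < ε := lt_min heps (lt_min (by linarith) (by linarith))
  have hε_le : ε ≤ eps ∧ ε ≤ x + p / a ∧ ε ≤ -x :=
    ⟨min_le_left _ _, (min_le_right _ _).trans (min_le_left _ _),
      (min_le_right _ _).trans (min_le_right _ _)⟩
  refine exists_inter_Ioo_eq_singleton hε hxA fun hacc => ?_
  have hbd : ∀ y ∈ (setA p lam d r a mu V ∩ Metric.ball x ε) \ {x},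
      (V y - V x) / (y - x) ∈ Icc (a / (lam + d)) K := by
    rintro y ⟨⟨hyA, hyx⟩, hy_ne⟩
    have hyx' := abs_sub_lt_iff.1 (Metric.mem_ball.1 hyx)
    have hy_lt : y < 0 := by linarith
    have hy_gt : -(p / a) < y := by linarith
    refine ⟨div_le_div_sub_of_mem_setA hlam.le hld hI hxA hyA hx_lt hy_lt hy_ne, ?_⟩
    exact div_sub_le_of_lipschitzOnWith hLip ⟨hx_gt, Metric.mem_ball_self heps⟩
      ⟨hy_gt, Metric.ball_subset_ball hε_le.1 hyx⟩
  obtain ⟨h, dd, hdd, hsign, h0, hlim⟩ := exists_oneSided_seq_tendsto_div V isCompact_Icc hacc hbd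
  have hdd_le := le_one_of_mem_setA hxA (drift_pos_of_neg (hld.trans hald) hx_gt hx_lt)
    (hV.derivLim x hx_gt h dd hsign h0 hlim).2
  linarith [hdd.1, (one_lt_div hld).2 hald]

theorem stmt10
    (p lam d r a : ℝ) (hp : 0 < p) (hlam : 0 < lam) (hd : 0 < d)
    (hr : 0 < r) (hra : r < a) (hrd : r < d)
    (mu : Measure ℝ) [IsProbabilityMeasure mu] (hmu : mu (Set.Iic 0) = 0)
    (hald : lam + d < a)
    (V : ℝ → ℝ) (hV : IsCandidate p lam d r a mu V) :
    ∀ x ∈ setA p lam d r a mu V ∩ Set.Ioo (-(p / a)) 0,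
      ∃ h : ℝ, 0 < h ∧
        setA p lam d r a mu V ∩ Set.Ioo (x - h) (x + h) = {x} :=
  stmt10_general p lam d r a hlam hd mu hald V hV
end
end
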